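/- Let d ∈ ℕ, α ∈ (0,1), γ ∈ (0,∞), let H ∈ ℝ^{d×d} be symmetric with eigenvalues λ_1, ..., λ_d, let κ = min{λ_1,...,λ_d}, K = max{λ_1,...,λ_d}, and let A ∈ ℝ^{2d×2d} be the block matrix A = [[I_d − (1−α)γH, −αγI_d], [(1−α)H, αI_d]]. If κ > 0, γ ≤ 1/sqrt(κK), and α = ((1 − γκ)/(1 + γκ))², then the spectral radius of A satisfies ρ(A) = sqrt(α). -/

import Mathlib

/-!
Block elimination against the scalar block `α • 1` shows that the characteristic polynomial of
`A` is `∏ᵢ (μ² - tᵢ μ + α)` with `tᵢ = 1 + α - (1 - α) γ λᵢ`. Put `r = (1 - γκ) / (1 + γκ)`, so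
`α = r²`. Then `t = 2r` at `λ = κ`, while `γ²κK ≤ 1` is exactly `t ≥ -2r` at `λ = K`; since `t`
is affine in `λ`, every `tᵢ² ≤ 4α`. A real quadratic with nonpositive discriminant has both
roots on the circle of radius `√α`, and at `λ = κ` the root `r` lies on it.
-/

open Filter

noncomputable section

/-- Spectral radius of a real matrix: the maximum absolute value of its complex eigenvalues. -/
def specRadR {n : Type*} [Fintype n] [DecidableEq n] (M : Matrix n n ℝ) : ℝ :=
  sSup ((fun z => ‖z‖) '' spectrum ℂ (M.map Complex.ofReal))

open Polynomial

namespace Matrix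

variable {n : Type*} [Fintype n] [DecidableEq n]

theorem det_smul_one_add_smul_of_charpoly_eq_prod {K : Type*} [Field K] {M : Matrix n n K}
    {ev : n → K} (hM : M.charpoly = ∏ i, (X - C (ev i))) (p q : K) :
    (p • (1 : Matrix n n K) + q • M).det = ∏ i, (p + q * ev i) := by
  rcases eq_or_ne q 0 with rfl | hq
  · simp [Finset.prod_const, Finset.card_univ]
  have hscale : p • (1 : Matrix n n K) + q • M = (-q) • (scalar n (-p / q) - M) := by
    rw [smul_sub, scalar_apply, ← smul_one_eq_diagonal, smul_smul]
    field_simp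
    module
  have hchar := congrArg (eval (-p / q)) hM
  rw [eval_charpoly, eval_prod] at hchar
  simp only [eval_sub, eval_X, eval_C] at hchar
  rw [hscale, det_smul, hchar, Fintype.card, ← Finset.prod_const, ← Finset.prod_mul_distrib]
  congr 1 with i
  field_simp
  ring

theorem det_fromBlocks_smul_one₂₂ {𝕜 : Type*} [NontriviallyNormedField 𝕜]
    (A B C : Matrix n n 𝕜) (c : 𝕜) :
    (fromBlocks A B C (c • 1)).det = (c • A - B * C).det := by
  have hcont : Continuous fun c : 𝕜 => (fromBlocks A B C (c • 1)).det :=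
    (continuous_const.matrix_fromBlocks continuous_const continuous_const
      (continuous_id.smul continuous_const)).matrix_det
  have hcont' : Continuous fun c : 𝕜 => (c • A - B * C).det := by fun_prop
  refine congrFun (hcont.ext_on (dense_compl_singleton 0) hcont' fun c (hc : c ≠ 0) => ?_) c
  have hmul : fromBlocks (c • 1) (-B) 0 1 * fromBlocks A B C (c • 1)
      = fromBlocks (c • A - B * C) 0 C (c • 1) := by
    simp [fromBlocks_multiply, sub_eq_add_neg]
  have hdet := congrArg det hmul
  rw [det_mul, det_fromBlocks_zero₂₁, det_fromBlocks_zero₁₂, det_one, mul_one, det_smul,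
    det_one, mul_one, mul_comm] at hdet
  exact mul_right_cancel₀ (pow_ne_zero _ hc) hdet

end Matrix

open Matrix

section MomentumMatrix

variable {n : Type*} [Fintype n] [DecidableEq n]

def momentumMatrix {R : Type*} [CommRing R] (α γ : R) (H : Matrix n n R) :
    Matrix (n ⊕ n) (n ⊕ n) R :=
  fromBlocks (1 - ((1 - α) * γ) • H) ((-(α * γ)) • 1) ((1 - α) • H) (α • 1)

omit [Fintype n] in
theorem momentumMatrix_map {R S : Type*} [CommRing R] [CommRing S] (f : R →+* S) (α γ : R)
    (H : Matrix n n R) :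
    (momentumMatrix α γ H).map f = momentumMatrix (f α) (f γ) (H.map f) := by
  ext (i | i) (j | j) <;> simp [momentumMatrix, one_apply, apply_ite f]

theorem det_scalar_sub_momentumMatrix {𝕜 : Type*} [NontriviallyNormedField 𝕜] (α γ μ : 𝕜)
    (H : Matrix n n 𝕜) :
    (scalar (n ⊕ n) μ - momentumMatrix α γ H).det
      = (((μ - 1) * (μ - α)) • (1 : Matrix n n 𝕜) + ((1 - α) * γ * μ) • H).det := by
  have hblocks : scalar (n ⊕ n) μ - momentumMatrix α γ H
      = fromBlocks ((μ - 1) • 1 + ((1 - α) * γ) • H) ((α * γ) • 1) ((α - 1) • H)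
          ((μ - α) • 1) := by
    rw [momentumMatrix, scalar_apply, ← smul_one_eq_diagonal, ← fromBlocks_one, fromBlocks_smul,
      sub_eq_add_neg, fromBlocks_neg, fromBlocks_add]
    congr 1 <;> module
  rw [hblocks, det_fromBlocks_smul_one₂₂]
  congr 1
  simp only [smul_add, smul_smul, smul_mul_assoc, mul_smul_comm, one_mul]
  module

theorem mem_spectrum_momentumMatrix_iff {𝕜 : Type*} [NontriviallyNormedField 𝕜] {α γ : 𝕜}
    {H : Matrix n n 𝕜} {ev : n → 𝕜} (hH : H.charpoly = ∏ i, (X - C (ev i))) (μ : 𝕜) :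
    μ ∈ spectrum 𝕜 (momentumMatrix α γ H)
      ↔ ∃ i, μ ^ 2 - (1 + α - (1 - α) * γ * ev i) * μ + α = 0 := by
  rw [mem_spectrum_iff_isRoot_charpoly, IsRoot, eval_charpoly, det_scalar_sub_momentumMatrix,
    det_smul_one_add_smul_of_charpoly_eq_prod hH, Finset.prod_eq_zero_iff]
  refine exists_congr fun i => ?_
  simp only [Finset.mem_univ, true_and]
  constructor <;> intro h <;> linear_combination h

theorem mem_spectrum_map_momentumMatrix_iff {α γ : ℝ} {H : Matrix n n ℝ} (hH : H.IsHermitian)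
    (μ : ℂ) :
    μ ∈ spectrum ℂ ((momentumMatrix α γ H).map Complex.ofReal)
      ↔ ∃ i, μ ^ 2 - ((1 + α - (1 - α) * γ * hH.eigenvalues i : ℝ) : ℂ) * μ + (α : ℂ) = 0 := by
  have hcharpoly : (H.map Complex.ofRealHom).charpoly
      = ∏ i, (X - C (hH.eigenvalues i : ℂ)) := by
    rw [charpoly_map, hH.charpoly_eq]
    simp [Polynomial.map_prod]
  rw [show (Complex.ofReal : ℝ → ℂ) = Complex.ofRealHom from rfl, momentumMatrix_map,
    mem_spectrum_momentumMatrix_iff hcharpoly]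
  push_cast [Complex.ofRealHom_eq_coe]
  rfl

end MomentumMatrix

theorem Complex.norm_eq_sqrt_of_sq_sub_mul_add_eq_zero {t a : ℝ} (ht : t ^ 2 ≤ 4 * a) {μ : ℂ}
    (h : μ ^ 2 - t * μ + a = 0) : ‖μ‖ = √a := by
  have hre : μ.re ^ 2 - μ.im ^ 2 - t * μ.re + a = 0 := by
    simpa [pow_two] using congrArg re h
  have him : μ.im * (2 * μ.re - t) = 0 := by
    have := congrArg im h
    simp only [pow_two, add_im, sub_im, mul_im, ofReal_re, ofReal_im, zero_im] at this
    linear_combination this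
  have hsum : μ.re ^ 2 + μ.im ^ 2 = a := by
    rcases mul_eq_zero.mp him with hy | hx
    · rw [hy] at hre ⊢
      nlinarith [sq_nonneg (2 * μ.re - t)]
    · have ht : t = 2 * μ.re := by linarith
      rw [ht] at hre
      linarith
  rw [norm_def, normSq_apply, ← hsum, pow_two, pow_two]

theorem sq_mul_le_one_of_le_one_div_sqrt {γ x : ℝ} (hγ : 0 ≤ γ) (hx : 0 < x)
    (h : γ ≤ 1 / √x) : γ ^ 2 * x ≤ 1 := by
  have hγx : γ * √x ≤ 1 := (le_div_iff₀ (Real.sqrt_pos.mpr hx)).mp h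
  calc γ ^ 2 * x = (γ * √x) ^ 2 := by rw [mul_pow, Real.sq_sqrt hx.le]
    _ ≤ 1 := pow_le_one₀ (by positivity) hγx

section MomentumRate

def momentumRate (γ κ : ℝ) : ℝ := (1 - γ * κ) / (1 + γ * κ)

variable {γ κ K lam : ℝ}

theorem momentumRate_mul_one_add (hγκ : 0 ≤ γ * κ) :
    momentumRate γ κ * (1 + γ * κ) = 1 - γ * κ :=
  div_mul_cancel₀ _ (by positivity)

theorem momentumRate_le_one (hγκ : 0 ≤ γ * κ) : momentumRate γ κ ≤ 1 :=
  (div_le_one (by positivity)).mpr (by linarith)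

theorem momentumRate_nonneg (hγ : 0 ≤ γ) (hκ : 0 ≤ κ) (hκK : κ ≤ K)
    (hγκK : γ ^ 2 * (κ * K) ≤ 1) : 0 ≤ momentumRate γ κ := by
  have hγκ : 0 ≤ γ * κ := mul_nonneg hγ hκ
  have hγκ1 : γ * κ ≤ 1 := by
    refine (pow_le_one_iff_of_nonneg hγκ two_ne_zero).mp ?_
    nlinarith [mul_le_mul_of_nonneg_left hκK (by positivity : 0 ≤ γ ^ 2 * κ)]
  exact div_nonneg (by linarith) (by positivity)

theorem momentum_trace_momentumRate (hγκ : 0 ≤ γ * κ) :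
    1 + momentumRate γ κ ^ 2 - (1 - momentumRate γ κ ^ 2) * γ * κ = 2 * momentumRate γ κ := by
  linear_combination (momentumRate γ κ - 1) * momentumRate_mul_one_add hγκ

theorem sq_momentum_trace_le (hγ : 0 ≤ γ) (hκ : 0 ≤ κ) (hγκK : γ ^ 2 * (κ * K) ≤ 1)
    (hκlam : κ ≤ lam) (hlamK : lam ≤ K) :
    (1 + momentumRate γ κ ^ 2 - (1 - momentumRate γ κ ^ 2) * γ * lam) ^ 2
      ≤ 4 * momentumRate γ κ ^ 2 := by
  set r := momentumRate γ κ
  have hγκ : 0 ≤ γ * κ := mul_nonneg hγ hκ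
  have hr0 : 0 ≤ r := momentumRate_nonneg hγ hκ (hκlam.trans hlamK) hγκK
  have hr1 : r ≤ 1 := momentumRate_le_one hγκ
  have hcoef : 0 ≤ (1 - r ^ 2) * γ := mul_nonneg (by nlinarith) hγ
  have hupper : 1 + r ^ 2 - (1 - r ^ 2) * γ * lam ≤ 2 * r := by
    rw [← momentum_trace_momentumRate hγκ]
    nlinarith
  have htrace_K : 1 + r ^ 2 - (1 - r ^ 2) * γ * K + 2 * r
      = (1 + r) ^ 2 * (1 - γ ^ 2 * (κ * K)) := by
    linear_combination ((1 + r) * γ * K) * momentumRate_mul_one_add hγκ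
  have hlower : -(2 * r) ≤ 1 + r ^ 2 - (1 - r ^ 2) * γ * lam := by
    nlinarith [mul_nonneg (sq_nonneg (1 + r)) (sub_nonneg.mpr hγκK)]
  nlinarith [sq_le_sq' hlower hupper]

end MomentumRate

theorem norm_image_spectrum_momentumMatrix {n : Type*} [Fintype n] [DecidableEq n]
    {γ κ K : ℝ} {H : Matrix n n ℝ} (hH : H.IsHermitian) (hγ : 0 ≤ γ) (hκ : 0 ≤ κ)
    (hγκK : γ ^ 2 * (κ * K) ≤ 1) (hspec : spectrum ℝ H ⊆ Set.Icc κ K) (hκH : κ ∈ spectrum ℝ H) :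
    (fun z : ℂ => ‖z‖) ''
        spectrum ℂ ((momentumMatrix (momentumRate γ κ ^ 2) γ H).map Complex.ofReal)
      = {momentumRate γ κ} := by
  rw [hH.spectrum_real_eq_range_eigenvalues] at hspec hκH
  obtain ⟨i₀, hi₀⟩ := hκH
  have hr0 : 0 ≤ momentumRate γ κ :=
    momentumRate_nonneg hγ hκ (hspec ⟨i₀, hi₀⟩).2 hγκK
  refine Set.eq_singleton_iff_unique_mem.mpr ⟨⟨momentumRate γ κ, ?_, by simp [hr0]⟩, ?_⟩
  · refine (mem_spectrum_map_momentumMatrix_iff hH _).mpr ⟨i₀, ?_⟩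
    rw [hi₀, momentum_trace_momentumRate (mul_nonneg hγ hκ)]
    push_cast
    ring
  · rintro _ ⟨μ, hμ, rfl⟩
    obtain ⟨i, hi⟩ := (mem_spectrum_map_momentumMatrix_iff hH μ).mp hμ
    rw [← Real.sqrt_sq hr0]
    exact Complex.norm_eq_sqrt_of_sq_sub_mul_add_eq_zero
      (sq_momentum_trace_le hγ hκ hγκK (hspec ⟨i, rfl⟩).1 (hspec ⟨i, rfl⟩).2) hi

theorem stmt8_general (d : ℕ) (α γ : ℝ) (hγ : 0 < γ)
    (H : Matrix (Fin d) (Fin d) ℝ) (hH : H.IsSymm)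
    (lam : Fin d → ℝ) (hspec : spectrum ℝ H = Set.range lam)
    (κ K : ℝ) (hκ : IsLeast (Set.range lam) κ) (hK : IsGreatest (Set.range lam) K)
    (A : Matrix (Fin d ⊕ Fin d) (Fin d ⊕ Fin d) ℝ)
    (hA : A = Matrix.fromBlocks
      (1 - ((1 - α) * γ) • H) ((-(α * γ)) • (1 : Matrix (Fin d) (Fin d) ℝ))
      ((1 - α) • H) (α • (1 : Matrix (Fin d) (Fin d) ℝ)))
    (hκpos : 0 < κ) (hγ' : γ ≤ 1 / Real.sqrt (κ * K))
    (hαval : α = ((1 - γ * κ) / (1 + γ * κ)) ^ 2) :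
    specRadR A = Real.sqrt α := by
  have hκK : κ ≤ K := hκ.2 hK.1
  have hγκK : γ ^ 2 * (κ * K) ≤ 1 :=
    sq_mul_le_one_of_le_one_div_sqrt hγ.le (mul_pos hκpos (hκpos.trans_le hκK)) hγ'
  have hsubset : spectrum ℝ H ⊆ Set.Icc κ K := hspec ▸ fun _ hx => ⟨hκ.2 hx, hK.2 hx⟩
  change α = momentumRate γ κ ^ 2 at hαval
  subst hαval
  change A = momentumMatrix _ γ H at hA
  rw [specRadR, hA, norm_image_spectrum_momentumMatrix (isHermitian_iff_isSymm.mpr hH) hγ.le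
    hκpos.le hγκK hsubset (hspec ▸ hκ.1), csSup_singleton,
    Real.sqrt_sq (momentumRate_nonneg hγ.le hκpos.le hκK hγκK)]

/-- Spectral radius of the momentum iteration block matrix for the optimal parameters. -/
theorem stmt8 (d : ℕ) (hd : 0 < d) (α γ : ℝ) (hα : 0 < α) (hα1 : α < 1) (hγ : 0 < γ)
    (H : Matrix (Fin d) (Fin d) ℝ) (hH : H.IsSymm)
    (lam : Fin d → ℝ) (hspec : spectrum ℝ H = Set.range lam)
    (κ K : ℝ) (hκ : IsLeast (Set.range lam) κ) (hK : IsGreatest (Set.range lam) K)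
    (A : Matrix (Fin d ⊕ Fin d) (Fin d ⊕ Fin d) ℝ)
    (hA : A = Matrix.fromBlocks
      (1 - ((1 - α) * γ) • H) ((-(α * γ)) • (1 : Matrix (Fin d) (Fin d) ℝ))
      ((1 - α) • H) (α • (1 : Matrix (Fin d) (Fin d) ℝ)))
    (hκpos : 0 < κ) (hγ' : γ ≤ 1 / Real.sqrt (κ * K))
    (hαval : α = ((1 - γ * κ) / (1 + γ * κ)) ^ 2) :
    specRadR A = Real.sqrt α :=
  stmt8_general d α γ hγ H hH lam hspec κ K hκ hK A hA hκpos hγ' hαval
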